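/- Let r > 0, α ≥ 0, k > 0 with β := r·k - α ≠ 0 and 0 < i₀ ≤ k. Define i(t) = β·i₀/(r·i₀ + (β - r·i₀)·e^{-β t}) and s(t) = k - i(t). Then s and i satisfy the full SIS system s'(t) = -r·s(t)·i(t) + α·i(t) and i'(t) = r·s(t)·i(t) - α·i(t) for all t ≥ 0 (whenever the denominator is nonzero), with s(0) = k - i₀ and i(0) = i₀. -/

import Mathlib

theorem sis_full_system_solution (r α k i₀ : ℝ) (hr : 0 < r) (hα : 0 ≤ α)
    (hk : 0 < k) (β : ℝ) (hβ : β = r * k - α) (hβ0 : β ≠ 0)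
    (hi₀ : 0 < i₀) (hi₀k : i₀ ≤ k)
    (i s : ℝ → ℝ)
    (hi : i = fun t => β * i₀ / (r * i₀ + (β - r * i₀) * Real.exp (-β * t)))
    (hs : s = fun t => k - i t)
    (hden : ∀ t ≥ 0, r * i₀ + (β - r * i₀) * Real.exp (-β * t) ≠ 0) :
    s 0 = k - i₀ ∧ i 0 = i₀ ∧
      (∀ t ≥ 0, HasDerivAt s (-r * s t * i t + α * i t) t) ∧
      (∀ t ≥ 0, HasDerivAt i (r * s t * i t - α * i t) t) := by
  have hαeq : α = r * k - β := by linarith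
  have hi0 : i 0 = i₀ := by
    simp only [hi, mul_zero, Real.exp_zero, mul_one]
    field_simp
    rw [show i₀ * r + (β - i₀ * r) = β by ring, div_self hβ0]
  have hDdiff : ∀ t : ℝ, HasDerivAt (fun t => r * i₀ + (β - r * i₀) * Real.exp (-β * t))
      ((β - r * i₀) * (Real.exp (-β * t) * (-β))) t := by
    intro t
    have h1 : HasDerivAt (fun t : ℝ => -β * t) (-β) t := by
      simpa using (hasDerivAt_id t).const_mul (-β)
    have h2 := (h1.exp).const_mul (β - r * i₀)
    simpa using h2.const_add (r * i₀)
  have hI : ∀ t ≥ 0, HasDerivAt i (r * s t * i t - α * i t) t := by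
    intro t ht
    have hd := hden t ht
    have h := (hasDerivAt_const t (β * i₀)).div (hDdiff t) hd
    simp only [Pi.div_def] at h; rw [← hi] at h
    refine h.congr_deriv ?_
    have hd' : r * i₀ + (β - r * i₀) * Real.exp (-(β * t)) ≠ 0 := by
      rw [neg_mul] at hd; exact hd
    simp only [hs, hi, hαeq]
    field_simp [hd']
    ring
  refine ⟨by simp [hs, hi0], hi0, ?_, hI⟩
  intro t ht
  have h := (hI t ht).const_sub k
  simp only [hs] at h ⊢
  refine h.congr_deriv ?_
  ring
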